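/- arXiv:1809.05236 — 4 statements merged into one kernel-verified Lean document; each statement's English description precedes it below -/
import Mathlib

section
/- For every nonzero λ ∈ ℂ, every α ∈ ℂ and all integers m, n, the operators of Φ(λ,α) on ℂ[s,t,v] satisfy the commutator identity L_n ∘ Y_m − Y_m ∘ L_n = (m − n/2) · Y_{m+n} as ℂ-linear endomorphisms of ℂ[s,t,v]. -/
open MvPolynomial

/-- Substitution `s ↦ s - m` (the variable `s` is `X 0`) on `ℂ[s,t,v]`. -/
noncomputable def substS (m : ℤ) : Module.End ℂ (MvPolynomial (Fin 3) ℂ) :=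
  (aeval (fun i : Fin 3 =>
    if i = 0 then (X 0 : MvPolynomial (Fin 3) ℂ) - C (m : ℂ) else X i)).toLinearMap

/-- Partial differentiation with respect to `v` (the variable `X 2`). -/
noncomputable def Dv : Module.End ℂ (MvPolynomial (Fin 3) ℂ) :=
  (pderiv (2 : Fin 3)).toLinearMap

/-- Multiplication by a fixed polynomial, as a linear endomorphism. -/
noncomputable def mulOp (p : MvPolynomial (Fin 3) ℂ) : Module.End ℂ (MvPolynomial (Fin 3) ℂ) :=
  LinearMap.mulLeft ℂ p

/-- The operator `L_m` of `Φ(λ,α)`: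
`L_m·f = λ^m((s+mα)f(s−m,t,v) − (m/2)v ∂_v f(s−m,t,v) + (m²/4)t ∂_v² f(s−m,t,v))`. -/
noncomputable def Lop (lam α : ℂ) (m : ℤ) : Module.End ℂ (MvPolynomial (Fin 3) ℂ) :=
  lam ^ m • (mulOp (X 0 + C ((m : ℂ) * α)) * substS m
    - ((m : ℂ) / 2) • (mulOp (X 2) * (Dv * substS m))
    + ((m : ℂ) ^ 2 / 4) • (mulOp (X 1) * (Dv * (Dv * substS m))))

/-- The operator `M_m` of `Φ(λ,α)`: `M_m·f = λ^m t f(s−m,t,v)`. -/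
noncomputable def Mop (lam : ℂ) (m : ℤ) : Module.End ℂ (MvPolynomial (Fin 3) ℂ) :=
  lam ^ m • (mulOp (X 1) * substS m)

/-- The operator `Y_m` of `Φ(λ,α)`: `Y_m·f = λ^m(v f(s−m,t,v) − m t ∂_v f(s−m,t,v))`. -/
noncomputable def Yop (lam : ℂ) (m : ℤ) : Module.End ℂ (MvPolynomial (Fin 3) ℂ) :=
  lam ^ m • (mulOp (X 2) * substS m - (m : ℂ) • (mulOp (X 1) * (Dv * substS m)))

/- ### Auxiliary lemmas -/

lemma substS_substS (m n : ℤ) : substS n * substS m = substS (m + n) := by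
  unfold substS
  rw [Module.End.mul_eq_comp, ← AlgHom.comp_toLinearMap]
  congr 1
  rw [comp_aeval]
  apply MvPolynomial.algHom_ext
  intro i
  by_cases h : i = 0 <;> simp [h] <;> ring

lemma mulOp_mul (p q : MvPolynomial (Fin 3) ℂ) : mulOp (p * q) = mulOp p * mulOp q := by
  ext f; simp [mulOp, mul_assoc]

lemma mulOp_add (p q : MvPolynomial (Fin 3) ℂ) : mulOp (p + q) = mulOp p + mulOp q := by
  ext f; simp [mulOp, add_mul]

lemma mulOp_sub (p q : MvPolynomial (Fin 3) ℂ) : mulOp (p - q) = mulOp p - mulOp q := by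
  ext f; simp [mulOp, sub_mul]

lemma mulOp_C (c : ℂ) : mulOp (C c) = c • (1 : Module.End ℂ (MvPolynomial (Fin 3) ℂ)) := by
  ext f; simp [mulOp, C_mul']

lemma mulOp_one : mulOp 1 = (1 : Module.End ℂ (MvPolynomial (Fin 3) ℂ)) := by
  ext f; simp [mulOp]

lemma mulOp_zero : mulOp 0 = (0 : Module.End ℂ (MvPolynomial (Fin 3) ℂ)) := by
  ext f; simp [mulOp]

lemma substS_mulOp (n : ℤ) (p : MvPolynomial (Fin 3) ℂ) :
    substS n * mulOp p = mulOp (substS n p) * substS n := by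
  ext f; simp [substS, mulOp]

lemma Dv_mulOp (p : MvPolynomial (Fin 3) ℂ) :
    Dv * mulOp p = mulOp p * Dv + mulOp (Dv p) := by
  ext f; simp [Dv, mulOp, pderiv_mul]; ring

lemma Dv_substS (n : ℤ) : Dv * substS n = substS n * Dv := by
  refine LinearMap.ext fun p => ?_
  simp only [Module.End.mul_apply, substS, Dv, AlgHom.toLinearMap_apply,
    Derivation.coeFn_coe]
  induction p using MvPolynomial.induction_on with
  | C a => simp
  | add p q hp hq => simp only [map_add, hp, hq]
  | mul_X p i hp =>
      rw [map_mul, pderiv_mul, pderiv_mul, map_add, map_mul, hp]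
      congr 1
      fin_cases i <;> simp [pderiv_X, Pi.single_apply]

lemma substS_apply_X0 (n : ℤ) :
    substS n (X 0) = (X 0 : MvPolynomial (Fin 3) ℂ) - C (n : ℂ) := by
  simp [substS]

lemma substS_apply_X1 (n : ℤ) : substS n (X 1) = (X 1 : MvPolynomial (Fin 3) ℂ) := by
  simp [substS]

lemma substS_apply_X2 (n : ℤ) : substS n (X 2) = (X 2 : MvPolynomial (Fin 3) ℂ) := by
  simp [substS]

lemma Dv_apply_X0 : Dv (X 0) = (0 : MvPolynomial (Fin 3) ℂ) := by
  simp [Dv, pderiv_X, Pi.single_apply]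

lemma Dv_apply_X1 : Dv (X 1) = (0 : MvPolynomial (Fin 3) ℂ) := by
  simp [Dv, pderiv_X, Pi.single_apply]

lemma Dv_apply_X2 : Dv (X 2) = (1 : MvPolynomial (Fin 3) ℂ) := by
  simp [Dv, pderiv_X, Pi.single_apply]

/- specialized commutation lemmas, plus right-associated variants -/

lemma sX0 (n : ℤ) : substS n * mulOp (X 0)
    = mulOp (X 0) * substS n - (n : ℂ) • substS n := by
  rw [substS_mulOp, substS_apply_X0, mulOp_sub, mulOp_C, sub_mul, smul_mul_assoc, one_mul]

lemma sX0' (n : ℤ) (x : Module.End ℂ (MvPolynomial (Fin 3) ℂ)) :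
    substS n * (mulOp (X 0) * x)
      = mulOp (X 0) * (substS n * x) - (n : ℂ) • (substS n * x) := by
  rw [← mul_assoc, sX0, sub_mul, smul_mul_assoc, mul_assoc]

lemma sX1 (n : ℤ) : substS n * mulOp (X 1) = mulOp (X 1) * substS n := by
  rw [substS_mulOp, substS_apply_X1]

lemma sX1' (n : ℤ) (x : Module.End ℂ (MvPolynomial (Fin 3) ℂ)) :
    substS n * (mulOp (X 1) * x) = mulOp (X 1) * (substS n * x) := by
  rw [← mul_assoc, sX1, mul_assoc]

lemma sX2 (n : ℤ) : substS n * mulOp (X 2) = mulOp (X 2) * substS n := by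
  rw [substS_mulOp, substS_apply_X2]

lemma sX2' (n : ℤ) (x : Module.End ℂ (MvPolynomial (Fin 3) ℂ)) :
    substS n * (mulOp (X 2) * x) = mulOp (X 2) * (substS n * x) := by
  rw [← mul_assoc, sX2, mul_assoc]

lemma sDv (n : ℤ) : substS n * Dv = Dv * substS n := (Dv_substS n).symm

lemma sDv' (n : ℤ) (x : Module.End ℂ (MvPolynomial (Fin 3) ℂ)) :
    substS n * (Dv * x) = Dv * (substS n * x) := by
  rw [← mul_assoc, sDv, mul_assoc]

lemma sS' (m n : ℤ) (x : Module.End ℂ (MvPolynomial (Fin 3) ℂ)) :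
    substS n * (substS m * x) = substS (m + n) * x := by
  rw [← mul_assoc, substS_substS]

lemma dX0 : Dv * mulOp (X 0) = mulOp (X 0) * Dv := by
  rw [Dv_mulOp, Dv_apply_X0, mulOp_zero, add_zero]

lemma dX0' (x : Module.End ℂ (MvPolynomial (Fin 3) ℂ)) :
    Dv * (mulOp (X 0) * x) = mulOp (X 0) * (Dv * x) := by
  rw [← mul_assoc, dX0, mul_assoc]

lemma dX1 : Dv * mulOp (X 1) = mulOp (X 1) * Dv := by
  rw [Dv_mulOp, Dv_apply_X1, mulOp_zero, add_zero]

lemma dX1' (x : Module.End ℂ (MvPolynomial (Fin 3) ℂ)) :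
    Dv * (mulOp (X 1) * x) = mulOp (X 1) * (Dv * x) := by
  rw [← mul_assoc, dX1, mul_assoc]

lemma dX2 : Dv * mulOp (X 2) = mulOp (X 2) * Dv + 1 := by
  rw [Dv_mulOp, Dv_apply_X2, mulOp_one]

lemma dX2' (x : Module.End ℂ (MvPolynomial (Fin 3) ℂ)) :
    Dv * (mulOp (X 2) * x) = mulOp (X 2) * (Dv * x) + x := by
  rw [← mul_assoc, dX2, add_mul, one_mul, mul_assoc]

lemma m21 : mulOp (X 2) * mulOp (X 1) = mulOp (X 1) * mulOp (X 2) := by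
  rw [← mulOp_mul, ← mulOp_mul, mul_comm]

lemma m21' (x : Module.End ℂ (MvPolynomial (Fin 3) ℂ)) :
    mulOp (X 2) * (mulOp (X 1) * x) = mulOp (X 1) * (mulOp (X 2) * x) := by
  rw [← mul_assoc, m21, mul_assoc]

lemma m20 : mulOp (X 2) * mulOp (X 0) = mulOp (X 0) * mulOp (X 2) := by
  rw [← mulOp_mul, ← mulOp_mul, mul_comm]

lemma m20' (x : Module.End ℂ (MvPolynomial (Fin 3) ℂ)) :
    mulOp (X 2) * (mulOp (X 0) * x) = mulOp (X 0) * (mulOp (X 2) * x) := by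
  rw [← mul_assoc, m20, mul_assoc]

lemma m10 : mulOp (X 1) * mulOp (X 0) = mulOp (X 0) * mulOp (X 1) := by
  rw [← mulOp_mul, ← mulOp_mul, mul_comm]

lemma m10' (x : Module.End ℂ (MvPolynomial (Fin 3) ℂ)) :
    mulOp (X 1) * (mulOp (X 0) * x) = mulOp (X 0) * (mulOp (X 1) * x) := by
  rw [← mul_assoc, m10, mul_assoc]

/-- `L_n ∘ Y_m − Y_m ∘ L_n = (m − n/2) Y_{m+n}` on `Φ(λ,α)`. -/
theorem stmt1 (lam : ℂ) (hlam : lam ≠ 0) (α : ℂ) (m n : ℤ) :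
    Lop lam α n * Yop lam m - Yop lam m * Lop lam α n
      = ((m : ℂ) - (n : ℂ) / 2) • Yop lam (m + n) := by
  have hzp : lam ^ (m + n) = lam ^ n * lam ^ m := by
    rw [zpow_add₀ hlam]; ring
  have hnm : substS (n + m) = substS (m + n) := by rw [add_comm]
  unfold Lop Yop
  rw [hzp]
  simp only [mulOp_add, mulOp_C, add_mul, mul_add, sub_mul, mul_sub, smul_sub, smul_add,
    smul_mul_assoc, mul_smul_comm, smul_smul, mul_assoc, one_mul, mul_one,
    sX0, sX0', sX1, sX1', sX2, sX2', sDv, sDv', substS_substS, sS',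
    dX0, dX0', dX1, dX1', dX2, dX2', m21, m21', m20, m20', m10, m10', hnm]
  module
end

section
/- For every nonzero λ ∈ ℂ, every α ∈ ℂ and all integers m, n, the operators of Φ(λ,α) on ℂ[s,t,v] satisfy the commutator identity L_n ∘ M_m − M_m ∘ L_n = m · M_{m+n} as ℂ-linear endomorphisms of ℂ[s,t,v]. -/
open MvPolynomial

-- auxiliary lemmas
lemma mulOp_apply (p f : MvPolynomial (Fin 3) ℂ) : mulOp p f = p * f := rfl

lemma substS_mul (k : ℤ) (p q : MvPolynomial (Fin 3) ℂ) :
    substS k (p * q) = substS k p * substS k q := by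
  simp [substS]

lemma substS_add (k : ℤ) (p q : MvPolynomial (Fin 3) ℂ) :
    substS k (p + q) = substS k p + substS k q := map_add _ _ _

lemma substS_smul (k : ℤ) (c : ℂ) (p : MvPolynomial (Fin 3) ℂ) :
    substS k (c • p) = c • substS k p := map_smul _ _ _

lemma substS_C (k : ℤ) (c : ℂ) : substS k (C c) = C c := by
  simp [substS]

lemma substS_X0 (k : ℤ) : substS k (X 0) = X 0 - C (k : ℂ) := by
  simp [substS]

lemma substS_X1 (k : ℤ) : substS k (X 1) = X 1 := by
  simp [substS]

lemma substS_X2 (k : ℤ) : substS k (X 2) = X 2 := by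
  simp [substS]

lemma substS_substS_s2 (a b : ℤ) (p : MvPolynomial (Fin 3) ℂ) :
    substS a (substS b p) = substS (a + b) p := by
  show ((aeval _).comp (aeval _)) p = aeval _ p
  rw [comp_aeval]
  refine congrFun (congrArg _ (MvPolynomial.algHom_ext fun i => ?_)) p
  fin_cases i <;> simp [sub_sub]

lemma substS_substS' (a b : ℤ) (p : MvPolynomial (Fin 3) ℂ) :
    substS b (substS a p) = substS (a + b) p := by
  rw [substS_substS_s2, add_comm]

lemma Dv_mul (p q : MvPolynomial (Fin 3) ℂ) : Dv (p * q) = Dv p * q + p * Dv q := by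
  simp [Dv, pderiv_mul]
  ring

lemma Dv_add (p q : MvPolynomial (Fin 3) ℂ) : Dv (p + q) = Dv p + Dv q := map_add _ _ _

lemma Dv_sub (p q : MvPolynomial (Fin 3) ℂ) : Dv (p - q) = Dv p - Dv q := map_sub _ _ _

lemma Dv_smul (c : ℂ) (p : MvPolynomial (Fin 3) ℂ) : Dv (c • p) = c • Dv p := map_smul _ _ _

lemma Dv_C (c : ℂ) : Dv (C c) = 0 := by simp [Dv]

lemma Dv_X0 : Dv (X 0 : MvPolynomial (Fin 3) ℂ) = 0 := by
  simp [Dv, pderiv_X_of_ne]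

lemma Dv_X1 : Dv (X 1 : MvPolynomial (Fin 3) ℂ) = 0 := by
  simp [Dv, pderiv_X_of_ne]

lemma Dv_X2 : Dv (X 2 : MvPolynomial (Fin 3) ℂ) = 1 := by
  simp [Dv]

lemma Dv_intCast (k : ℤ) : Dv ((k : ℤ) : MvPolynomial (Fin 3) ℂ) = 0 := by
  rw [← map_intCast (C : ℂ →+* MvPolynomial (Fin 3) ℂ) k, Dv_C]

lemma Dv_substS_s2 (k : ℤ) (p : MvPolynomial (Fin 3) ℂ) :
    Dv (substS k p) = substS k (Dv p) := by
  induction p using MvPolynomial.induction_on with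
  | C a => simp [substS_C, Dv_C]
  | add p q hp hq => simp [substS_add, Dv_add, hp, hq]
  | mul_X p i hp =>
    fin_cases i <;>
      simp [substS_mul, Dv_mul, hp, substS_X0, substS_X1, substS_X2,
        Dv_X0, Dv_X1, Dv_X2, Dv_sub, Dv_C, substS_C, Dv_intCast]


/-- `L_n ∘ M_m − M_m ∘ L_n = m · M_{m+n}` on `Φ(λ,α)`. -/
theorem stmt2 (lam : ℂ) (hlam : lam ≠ 0) (α : ℂ) (m n : ℤ) :
    Lop lam α n * Mop lam m - Mop lam m * Lop lam α n
      = (m : ℂ) • Mop lam (m + n) := by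
  apply LinearMap.ext
  intro f
  simp only [Lop, Mop, LinearMap.sub_apply, LinearMap.add_apply, LinearMap.smul_apply,
    Module.End.mul_apply]
  rw [zpow_add₀ hlam]
  simp only [mulOp_apply, map_smul, map_add, map_sub, map_mul,
    substS_mul, substS_add, substS_smul, substS_C, substS_X0, substS_X1, substS_X2,
    substS_substS_s2, substS_substS',
    Dv_mul, Dv_add, Dv_sub, Dv_smul, Dv_C, Dv_X0, Dv_X1, Dv_X2, Dv_substS_s2, map_zero,
    smul_eq_C_mul, map_mul (C : ℂ →+* _)]
  ring
end

section
/- For every nonzero λ ∈ ℂ, every α ∈ ℂ and every integer i ≥ 1, the ℂ-subspace t^i·ℂ[s,t,v] of ℂ[s,t,v] is invariant under the operators L_m, M_m and Y_m of Φ(λ,α) for every m ∈ ℤ; since t^i·ℂ[s,t,v] is a nonzero proper subspace, the module Φ(λ,α) over the Schrödinger–Virasoro algebra 𝔰𝔳(0) is reducible. -/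
open MvPolynomial

/-- For `i ≥ 1`, the subspace `t^i·ℂ[s,t,v]` (the range of multiplication by `t^i`)
is invariant under all operators `L_m, M_m, Y_m` of `Φ(λ,α)`, and is a nonzero proper
subspace; hence `Φ(λ,α)` is reducible over `𝔰𝔳(0)`. -/
theorem stmt7 (lam : ℂ) (hlam : lam ≠ 0) (α : ℂ) (i : ℕ) (hi : 1 ≤ i) :
    (∀ (m : ℤ) (f : MvPolynomial (Fin 3) ℂ),
        f ∈ LinearMap.range (mulOp ((X 1 : MvPolynomial (Fin 3) ℂ) ^ i)) →
      Lop lam α m f ∈ LinearMap.range (mulOp ((X 1 : MvPolynomial (Fin 3) ℂ) ^ i)) ∧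
      Mop lam m f ∈ LinearMap.range (mulOp ((X 1 : MvPolynomial (Fin 3) ℂ) ^ i)) ∧
      Yop lam m f ∈ LinearMap.range (mulOp ((X 1 : MvPolynomial (Fin 3) ℂ) ^ i))) ∧
    LinearMap.range (mulOp ((X 1 : MvPolynomial (Fin 3) ℂ) ^ i)) ≠ ⊥ ∧
    LinearMap.range (mulOp ((X 1 : MvPolynomial (Fin 3) ℂ) ^ i)) ≠ ⊤ := by

  set R := LinearMap.range (mulOp ((X 1 : MvPolynomial (Fin 3) ℂ) ^ i)) with hR
  have hmem : ∀ f : MvPolynomial (Fin 3) ℂ, f ∈ R ↔ ∃ g, (X 1 : MvPolynomial (Fin 3) ℂ) ^ i * g = f := by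
    intro f
    constructor
    · rintro ⟨g, rfl⟩; exact ⟨g, rfl⟩
    · rintro ⟨g, rfl⟩; exact ⟨g, rfl⟩
  have hsub : ∀ (m : ℤ) (f : MvPolynomial (Fin 3) ℂ), f ∈ R → substS m f ∈ R := by
    intro m f hf
    rw [hmem] at hf ⊢
    obtain ⟨g, rfl⟩ := hf
    refine ⟨substS m g, ?_⟩
    simp [substS, map_mul, map_pow]
  have hDv : ∀ f : MvPolynomial (Fin 3) ℂ, f ∈ R → Dv f ∈ R := by
    intro f hf
    rw [hmem] at hf ⊢
    obtain ⟨g, rfl⟩ := hf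
    refine ⟨Dv g, ?_⟩
    have : (pderiv (2 : Fin 3)) ((X 1 : MvPolynomial (Fin 3) ℂ) ^ i * g)
        = X 1 ^ i * (pderiv (2 : Fin 3)) g := by
      rw [pderiv_mul]
      have : (pderiv (2 : Fin 3)) ((X 1 : MvPolynomial (Fin 3) ℂ) ^ i) = 0 := by
        rw [Derivation.leibniz_pow]
        simp [pderiv_X]
      rw [this]; ring
    simpa [Dv] using this.symm
  have hmul : ∀ (p f : MvPolynomial (Fin 3) ℂ), f ∈ R → mulOp p f ∈ R := by
    intro p f hf
    rw [hmem] at hf ⊢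
    obtain ⟨g, rfl⟩ := hf
    exact ⟨p * g, by simp [mulOp]; ring⟩
  refine ⟨?_, ?_, ?_⟩
  · intro m f hf
    have h1 := hsub m f hf
    refine ⟨?_, ?_, ?_⟩
    · have := R.smul_mem (lam ^ m)
        (R.add_mem
          (R.sub_mem (hmul (X 0 + C ((m : ℂ) * α)) _ h1)
            (R.smul_mem ((m : ℂ) / 2) (hmul (X 2) _ (hDv _ h1))))
          (R.smul_mem ((m : ℂ) ^ 2 / 4) (hmul (X 1) _ (hDv _ (hDv _ h1)))))
      simpa [Lop, Module.End.mul_apply, sub_eq_add_neg] using this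
    · have := R.smul_mem (lam ^ m) (hmul (X 1) _ h1)
      simpa [Mop, Module.End.mul_apply] using this
    · have := R.smul_mem (lam ^ m)
        (R.sub_mem (hmul (X 2) _ h1)
          (R.smul_mem (m : ℂ) (hmul (X 1) _ (hDv _ h1))))
      simpa [Yop, Module.End.mul_apply] using this
  · intro hbot
    have : ((X 1 : MvPolynomial (Fin 3) ℂ) ^ i) ∈ R := (hmem _).2 ⟨1, by ring⟩
    rw [hbot, Submodule.mem_bot] at this
    exact pow_ne_zero i (X_ne_zero 1) this
  · intro htop
    have h1 : (1 : MvPolynomial (Fin 3) ℂ) ∈ R := htop ▸ Submodule.mem_top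
    rw [hmem] at h1
    obtain ⟨g, hg⟩ := h1
    have := congrArg (eval (fun _ : Fin 3 => (0 : ℂ))) hg
    rw [map_mul, map_pow, eval_X, map_one, zero_pow (by omega : i ≠ 0), zero_mul] at this
    exact one_ne_zero this.symm
end

section
/- There exists no 𝔤-module V, for 𝔤 = 𝔰𝔳(1/2), together with an element w ∈ V such that the ℂ-linear map from the polynomial ring ℂ[x,y] to V sending a polynomial p(x,y) to p(ρ(L₀),ρ(M₀))·w is bijective; that is, the class of free U(ℂL₀ ⊕ ℂM₀)-modules of rank 1 over the Schrödinger–Virasoro algebra 𝔰𝔳(1/2) is empty. -/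
/-- Evaluation of a two-variable polynomial `p(x,y)` at two operators `A, B`, applied to a
vector `w`: `p(A,B)·w` (when `A,B` commute, this is the usual substitution). -/
noncomputable def evalP2 {V : Type*} [AddCommGroup V] [Module ℂ V]
    (A B : Module.End ℂ V) (w : V) (p : MvPolynomial (Fin 2) ℂ) : V :=
  (AddMonoidAlgebra.coeff p).sum fun d c => c • ((A ^ d 0 * B ^ d 1) w)

/-!
Write `A = ρ(L₀)`, `B = ρ(M₀)` and `E p = p(A, B)·w`. If `⁅L₀, z⁆ = c z` and `⁅M₀, z⁆ = 0`, then
`ρ(z) A = (A - c) ρ(z)` and `ρ(z)` commutes with `B`, so once `ρ(z) w = E q` we get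
`ρ(z) (E p) = E (p(x - c, y) · q)`. Hence the bracket of two such elements acts on `w` through an
explicit polynomial, and injectivity of `E` turns the brackets `⁅Y_{-1/2}, M₁⁆ = ⁅Y_{1/2}, M₁⁆ = 0`
and `⁅Y_{-1/2}, Y_{1/2}⁆ = ⁅L₋₁, M₁⁆ = M₀` into functional equations for the polynomials
representing `ρ(Y_{±1/2}) w` and `ρ(M₁) w` (the last bracket only shows `ρ(M₁) w ≠ 0`). Viewed as polynomials in `x` over `ℂ[y]`, the first two
force all three to be constant in `x`, and then `⁅Y_{-1/2}, Y_{1/2}⁆` would act on `w` as `0`,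
not as `y`.
-/

namespace Polynomial

variable {R : Type*} [CommRing R] [IsDomain R] [CharZero R]

theorem eq_C_eval_zero_of_taylor_eq {r : R} (hr : r ≠ 0) {G : R[X]} (h : taylor r G = G) :
    G = C (G.eval 0) := by
  have hper (n : ℕ) : G.eval (n * r) = G.eval 0 := by
    induction n with
    | zero => simp
    | succ n ih => rw [Nat.cast_succ, add_one_mul, ← taylor_eval, h, ih]
  refine sub_eq_zero.mp (eq_zero_of_infinite_isRoot _ ?_)
  refine Set.infinite_of_injective_forall_mem (f := fun n : ℕ => (n : R) * r) ?_ ?_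
  · exact fun m n hmn => Nat.cast_injective (mul_right_cancel₀ hr hmn)
  · intro n
    simp [hper]

theorem natDegree_eq_zero_of_taylor_mul_eq {r : R} (hr : r ≠ 0) {P Q : R[X]} (hP : P ≠ 0)
    (hQ : Q ≠ 0) (h : taylor r P * Q = taylor (-(2 * r)) Q * P) :
    P.natDegree = 0 ∧ Q.natDegree = 0 := by
  -- `G` is `2r`-periodic, hence constant.
  set G := P * taylor (-r) Q * taylor (-(2 * r)) Q
  have h' : taylor (2 * r) P * taylor r Q = taylor (-r) Q * taylor r P := by
    have := congrArg (taylor r) h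
    rwa [taylor_mul, taylor_mul, taylor_taylor, taylor_taylor, ← two_mul,
      show r + -(2 * r) = -r by ring] at this
  have hG : taylor (2 * r) G = G :=
    calc taylor (2 * r) G = (taylor (2 * r) P * taylor r Q) * Q := by
          rw [taylor_mul, taylor_mul, taylor_taylor, taylor_taylor, show 2 * r + -r = r by ring,
            add_neg_cancel, taylor_zero]
      _ = taylor (-r) Q * (taylor r P * Q) := by rw [h']; ring
      _ = G := by rw [h]; ring
  have hdeg := congrArg natDegree (eq_C_eval_zero_of_taylor_eq (mul_ne_zero two_ne_zero hr) hG)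
  have hτQ (s : R) : taylor s Q ≠ 0 := by rwa [Ne, taylor_eq_zero]
  rw [natDegree_C, natDegree_mul (mul_ne_zero hP (hτQ _)) (hτQ _), natDegree_mul hP (hτQ _),
    natDegree_taylor, natDegree_taylor] at hdeg
  omega

theorem taylor_mul_sub_taylor_mul_eq_zero {r : R} (hr : r ≠ 0) {F H H₀ : R[X]} (hF : F ≠ 0)
    (hH : H ≠ 0) (hFH : taylor r F * H = taylor (-(2 * r)) H * F)
    (hFH₀ : taylor (-r) F * H₀ = taylor (-(2 * r)) H₀ * F) :
    taylor r H₀ * H - taylor (-r) H * H₀ = 0 := by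
  obtain ⟨hF0, hH0⟩ := natDegree_eq_zero_of_taylor_mul_eq hr hF hH hFH
  have hFC := eq_C_of_natDegree_eq_zero hF0
  have hC : C (F.coeff 0) ≠ 0 := hFC ▸ hF
  rw [hFC, taylor_C] at hFH₀
  have hH₀ : taylor (-(2 * r)) H₀ = H₀ :=
    (mul_right_cancel₀ hC (by rwa [mul_comm] at hFH₀)).symm
  rw [eq_C_of_natDegree_eq_zero hH0, eq_C_eval_zero_of_taylor_eq (by simpa using hr) hH₀]
  simp only [taylor_C, mul_comm, sub_self]

end Polynomial

namespace MvPolynomial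

section CommRing

variable {R : Type*} [CommRing R] {n : ℕ}

noncomputable def shiftZero (c : R) :
    MvPolynomial (Fin (n + 1)) R →ₐ[R] MvPolynomial (Fin (n + 1)) R :=
  aeval (Fin.cons (X 0 + C c) fun i => X i.succ)

@[simp] theorem shiftZero_X_zero (c : R) : shiftZero (n := n) c (X 0) = X 0 + C c := by
  simp [shiftZero]

@[simp] theorem shiftZero_X_succ (c : R) (i : Fin n) : shiftZero c (X i.succ) = X i.succ := by
  simp [shiftZero]

theorem finSuccEquiv_shiftZero (c : R) (p : MvPolynomial (Fin (n + 1)) R) :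
    finSuccEquiv R n (shiftZero c p) = Polynomial.taylor (C c) (finSuccEquiv R n p) := by
  suffices (finSuccEquiv R n).toAlgHom.comp (shiftZero c) =
      ((Polynomial.taylorAlgHom (C c : MvPolynomial (Fin n) R)).restrictScalars R).comp
        (finSuccEquiv R n).toAlgHom from
    congrArg (· p) this
  refine algHom_ext fun i => Fin.cases ?_ (fun i => ?_) i
  · simp [Polynomial.taylor_X, finSuccEquiv_apply]
  · simp [finSuccEquiv_X_succ]

end CommRing

variable {R : Type*} [CommRing R] [IsDomain R] [CharZero R] {n : ℕ}

theorem shiftZero_mul_sub_shiftZero_mul_eq_zero {r : R} (hr : r ≠ 0)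
    {f h h₀ : MvPolynomial (Fin (n + 1)) R} (hf : f ≠ 0) (hh : h ≠ 0)
    (hfh : shiftZero r f * h = shiftZero (-(2 * r)) h * f)
    (hfh₀ : shiftZero (-r) f * h₀ = shiftZero (-(2 * r)) h₀ * f) :
    shiftZero r h₀ * h - shiftZero (-r) h * h₀ = 0 := by
  apply (finSuccEquiv R n).injective
  replace hfh := congrArg (finSuccEquiv R n) hfh
  replace hfh₀ := congrArg (finSuccEquiv R n) hfh₀
  simp only [map_mul, map_sub, map_neg, map_zero, finSuccEquiv_shiftZero] at hfh hfh₀ ⊢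
  exact Polynomial.taylor_mul_sub_taylor_mul_eq_zero (by simpa using hr)
    ((map_ne_zero_iff _ (finSuccEquiv R n).injective).mpr hf)
    ((map_ne_zero_iff _ (finSuccEquiv R n).injective).mpr hh) hfh hfh₀

end MvPolynomial

open MvPolynomial

section evalP2

variable {V : Type*} [AddCommGroup V] [Module ℂ V] (A B : Module.End ℂ V) (w : V)

noncomputable def evalP2LinearMap : MvPolynomial (Fin 2) ℂ →ₗ[ℂ] V :=
  Finsupp.linearCombination ℂ (fun d : Fin 2 →₀ ℕ => (A ^ d 0 * B ^ d 1) w) ∘ₗ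
    (AddMonoidAlgebra.coeffLinearEquiv ℂ).toLinearMap

theorem coe_evalP2LinearMap : ⇑(evalP2LinearMap A B w) = evalP2 A B w := rfl

theorem evalP2_zero : evalP2 A B w 0 = 0 :=
  map_zero (evalP2LinearMap A B w)

theorem evalP2_add (p q : MvPolynomial (Fin 2) ℂ) :
    evalP2 A B w (p + q) = evalP2 A B w p + evalP2 A B w q :=
  map_add (evalP2LinearMap A B w) p q

theorem evalP2_sub (p q : MvPolynomial (Fin 2) ℂ) :
    evalP2 A B w (p - q) = evalP2 A B w p - evalP2 A B w q :=
  map_sub (evalP2LinearMap A B w) p q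

theorem evalP2_C_mul (a : ℂ) (p : MvPolynomial (Fin 2) ℂ) :
    evalP2 A B w (C a * p) = a • evalP2 A B w p := by
  rw [C_mul', ← coe_evalP2LinearMap, map_smul]

theorem evalP2_monomial (d : Fin 2 →₀ ℕ) (a : ℂ) :
    evalP2 A B w (monomial d a) = a • (A ^ d 0 * B ^ d 1) w := by
  simp [evalP2, sum_monomial_eq]

theorem evalP2_one : evalP2 A B w 1 = w := by
  simpa using evalP2_monomial A B w 0 1

theorem evalP2_X_zero_mul (q : MvPolynomial (Fin 2) ℂ) :
    evalP2 A B w (X 0 * q) = A (evalP2 A B w q) := by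
  induction q using MvPolynomial.induction_on' with
  | monomial d a =>
    rw [X, monomial_mul, one_mul, add_comm, evalP2_monomial, evalP2_monomial]
    simp [pow_succ']
  | add p q hp hq => rw [mul_add, evalP2_add, evalP2_add, hp, hq, map_add]

variable {A B}

theorem evalP2_X_one_mul (hAB : Commute A B) (q : MvPolynomial (Fin 2) ℂ) :
    evalP2 A B w (X 1 * q) = B (evalP2 A B w q) := by
  induction q using MvPolynomial.induction_on' with
  | monomial d a =>
    have hB : A ^ d 0 * B ^ (d 1 + 1) = B * (A ^ d 0 * B ^ d 1) := by
      rw [pow_succ', ← mul_assoc, ← mul_assoc, (hAB.pow_left _).eq]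
    rw [X, monomial_mul, one_mul, add_comm, evalP2_monomial, evalP2_monomial]
    simp [hB]
  | add p q hp hq => rw [mul_add, evalP2_add, evalP2_add, hp, hq, map_add]

theorem evalP2_shiftZero_mul (hAB : Commute A B) {T : Module.End ℂ V} {c : ℂ}
    (hTA : T * A = (A - c • 1) * T) (hTB : Commute T B) {q : MvPolynomial (Fin 2) ℂ}
    (hq : evalP2 A B w q = T w) (p : MvPolynomial (Fin 2) ℂ) :
    T (evalP2 A B w p) = evalP2 A B w (shiftZero (-c) p * q) := by
  induction p using MvPolynomial.induction_on with
  | C a =>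
    have hCa := evalP2_C_mul A B w a 1
    rw [mul_one, evalP2_one] at hCa
    simp [shiftZero, hCa, evalP2_C_mul, hq]
  | add p p' hp hp' => rw [evalP2_add, map_add, hp, hp', map_add, add_mul, evalP2_add]
  | mul_X p i ih =>
    rw [mul_comm, map_mul, mul_assoc]
    match i with
    | 0 =>
      rw [evalP2_X_zero_mul, ← Module.End.mul_apply, hTA, Module.End.mul_apply, ih,
        shiftZero_X_zero, add_mul, evalP2_add, evalP2_X_zero_mul, evalP2_C_mul, neg_smul,
        ← sub_eq_add_neg]
      rfl
    | 1 =>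
      rw [evalP2_X_one_mul w hAB, ← Module.End.mul_apply, hTB.eq, Module.End.mul_apply, ih,
        ← evalP2_X_one_mul w hAB, show (1 : Fin 2) = Fin.succ 0 from rfl, shiftZero_X_succ]

theorem evalP2_shiftZero_commutator (hAB : Commute A B) {T₁ T₂ : Module.End ℂ V} {c₁ c₂ : ℂ}
    (hT₁A : T₁ * A = (A - c₁ • 1) * T₁) (hT₁B : Commute T₁ B)
    (hT₂A : T₂ * A = (A - c₂ • 1) * T₂) (hT₂B : Commute T₂ B)
    {q₁ q₂ : MvPolynomial (Fin 2) ℂ} (hq₁ : evalP2 A B w q₁ = T₁ w)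
    (hq₂ : evalP2 A B w q₂ = T₂ w) :
    evalP2 A B w (shiftZero (-c₁) q₂ * q₁ - shiftZero (-c₂) q₁ * q₂) = T₁ (T₂ w) - T₂ (T₁ w) := by
  rw [evalP2_sub, ← evalP2_shiftZero_mul w hAB hT₁A hT₁B hq₁,
    ← evalP2_shiftZero_mul w hAB hT₂A hT₂B hq₂, hq₁, hq₂]

end evalP2

namespace LieModule

attribute [local instance 100] LieRing.ofAssociativeRing

variable {R g V : Type*} [CommRing R] [LieRing g] [LieAlgebra R g] [AddCommGroup V] [Module R V]
  [LieRingModule g V] [LieModule R g V]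

theorem toEnd_mul_toEnd_of_lie_eq_smul {x z : g} {c : R} (h : ⁅x, z⁆ = c • z) :
    toEnd R g V z * toEnd R g V x = (toEnd R g V x - c • 1) * toEnd R g V z := by
  have hxz := LieHom.map_lie (toEnd R g V) x z
  rw [h, map_smul, Ring.lie_def] at hxz
  rw [sub_mul, smul_mul_assoc, one_mul, hxz, sub_sub_cancel]

theorem commute_toEnd_of_lie_eq_zero {x z : g} (h : ⁅x, z⁆ = 0) :
    Commute (toEnd R g V x) (toEnd R g V z) := by
  rw [commute_iff_lie_eq, ← LieHom.map_lie, h, map_zero]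

end LieModule

open LieModule

section LieAlgebra

variable {g V : Type*} [LieRing g] [LieAlgebra ℂ g] [AddCommGroup V] [Module ℂ V]
  [LieRingModule g V] [LieModule ℂ g V]

theorem evalP2_shiftZero_commutator_eq_lie {x y z₁ z₂ : g} {c₁ c₂ : ℂ} (hxy : ⁅x, y⁆ = 0)
    (hx₁ : ⁅x, z₁⁆ = c₁ • z₁) (hx₂ : ⁅x, z₂⁆ = c₂ • z₂) (hy₁ : ⁅y, z₁⁆ = 0) (hy₂ : ⁅y, z₂⁆ = 0)
    {w : V} {q₁ q₂ : MvPolynomial (Fin 2) ℂ}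
    (hq₁ : evalP2 (toEnd ℂ g V x) (toEnd ℂ g V y) w q₁ = ⁅z₁, w⁆)
    (hq₂ : evalP2 (toEnd ℂ g V x) (toEnd ℂ g V y) w q₂ = ⁅z₂, w⁆) :
    evalP2 (toEnd ℂ g V x) (toEnd ℂ g V y) w
      (shiftZero (-c₁) q₂ * q₁ - shiftZero (-c₂) q₁ * q₂) = ⁅⁅z₁, z₂⁆, w⁆ := by
  rw [evalP2_shiftZero_commutator w (commute_toEnd_of_lie_eq_zero hxy)
    (toEnd_mul_toEnd_of_lie_eq_smul hx₁) (commute_toEnd_of_lie_eq_zero hy₁).symm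
    (toEnd_mul_toEnd_of_lie_eq_smul hx₂) (commute_toEnd_of_lie_eq_zero hy₂).symm hq₁ hq₂, lie_lie]
  rfl

theorem not_bijective_evalP2_of_lie {x y zₘ zₚ m l : g} {r c : ℂ} (hr : r ≠ 0)
    (hxy : ⁅x, y⁆ = 0) (hxzₘ : ⁅x, zₘ⁆ = (-r) • zₘ) (hxzₚ : ⁅x, zₚ⁆ = r • zₚ)
    (hxm : ⁅x, m⁆ = (2 * r) • m) (hxl : ⁅x, l⁆ = c • l) (hyzₘ : ⁅y, zₘ⁆ = 0)
    (hyzₚ : ⁅y, zₚ⁆ = 0) (hym : ⁅y, m⁆ = 0) (hyl : ⁅y, l⁆ = 0) (hzz : ⁅zₘ, zₚ⁆ = y)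
    (hzₘm : ⁅zₘ, m⁆ = 0) (hzₚm : ⁅zₚ, m⁆ = 0) (hlm : ⁅l, m⁆ = y) (w : V) :
    ¬ Function.Bijective (evalP2 (toEnd ℂ g V x) (toEnd ℂ g V y) w) := by
  intro ⟨hinj, hsurj⟩
  have hX₁ : ⁅y, w⁆ = evalP2 (toEnd ℂ g V x) (toEnd ℂ g V y) w (X 1) := by
    simpa [evalP2_one] using
      (evalP2_X_one_mul w (commute_toEnd_of_lie_eq_zero (V := V) hxy) 1).symm
  have h0 := (evalP2_zero (toEnd ℂ g V x) (toEnd ℂ g V y) w).symm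
  obtain ⟨pm, hpm⟩ := hsurj ⁅m, w⁆
  obtain ⟨pₘ, hpₘ⟩ := hsurj ⁅zₘ, w⁆
  obtain ⟨pₚ, hpₚ⟩ := hsurj ⁅zₚ, w⁆
  obtain ⟨pl, hpl⟩ := hsurj ⁅l, w⁆
  have hzz' := evalP2_shiftZero_commutator_eq_lie hxy hxzₘ hxzₚ hyzₘ hyzₚ hpₘ hpₚ
  have hzₘm' := evalP2_shiftZero_commutator_eq_lie hxy hxzₘ hxm hyzₘ hym hpₘ hpm
  have hzₚm' := evalP2_shiftZero_commutator_eq_lie hxy hxzₚ hxm hyzₚ hym hpₚ hpm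
  have hlm' := evalP2_shiftZero_commutator_eq_lie hxy hxl hxm hyl hym hpl hpm
  rw [hzz, hX₁, neg_neg] at hzz'
  rw [hzₘm, zero_lie, h0, neg_neg] at hzₘm'
  rw [hzₚm, zero_lie, h0] at hzₚm'
  rw [hlm, hX₁] at hlm'
  have hpm_ne : pm ≠ 0 := by
    rintro rfl
    simpa using (hinj hlm').symm
  have hpₘ_ne : pₘ ≠ 0 := by
    rintro rfl
    simpa using (hinj hzz').symm
  exact X_ne_zero 1 ((hinj hzz').symm.trans (shiftZero_mul_sub_shiftZero_mul_eq_zero hr hpm_ne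
    hpₘ_ne (sub_eq_zero.mp (hinj hzₘm')) (sub_eq_zero.mp (hinj hzₚm'))))

end LieAlgebra

theorem stmt19_general
    -- `𝔤 = 𝔰𝔳(1/2)`: a complex Lie algebra with basis
    -- `{L n, M n : n ∈ ℤ} ∪ {Y_{k+1/2} : k ∈ ℤ}` ...
    (g : Type*) [LieRing g] [LieAlgebra ℂ g] (L M Y : ℤ → g)
    -- ... and brackets (with `Y k` standing for `Y_{k+1/2}`):
    (hLL : ∀ n m : ℤ, ⁅L n, L m⁆ = ((m : ℂ) - (n : ℂ)) • L (m + n))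
    (hLY : ∀ n k : ℤ, ⁅L n, Y k⁆ = (((k : ℂ) + 1 / 2) - (n : ℂ) / 2) • Y (k + n))
    (hLM : ∀ n m : ℤ, ⁅L n, M m⁆ = (m : ℂ) • M (m + n))
    (hYY : ∀ k l : ℤ, ⁅Y k, Y l⁆ = ((l : ℂ) - (k : ℂ)) • M (k + l + 1))
    (hYM : ∀ k m : ℤ, ⁅Y k, M m⁆ = 0)
    (hMM : ∀ n m : ℤ, ⁅M n, M m⁆ = 0)
    -- then no `𝔤`-module `V` is a free `U(ℂL₀ ⊕ ℂM₀)`-module of rank 1: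
    (V : Type*) [AddCommGroup V] [Module ℂ V] [LieRingModule g V] [LieModule ℂ g V]
    (w : V) :
    ¬ Function.Bijective (evalP2 (LieModule.toEnd ℂ g V (L 0))
        (LieModule.toEnd ℂ g V (M 0)) w) := by
  have hM₀Y (k : ℤ) : ⁅M 0, Y k⁆ = 0 := by rw [← lie_skew, hYM, neg_zero]
  have hM₀L : ⁅M 0, L (-1)⁆ = 0 := by rw [← lie_skew, hLM]; simp
  have hL₀Yₘ : ⁅L 0, Y (-1)⁆ = (-(1 / 2) : ℂ) • Y (-1) := by rw [hLY]; norm_num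
  have hL₀Yₚ : ⁅L 0, Y 0⁆ = (1 / 2 : ℂ) • Y 0 := by rw [hLY]; norm_num
  have hL₀M₁ : ⁅L 0, M 1⁆ = (2 * (1 / 2) : ℂ) • M 1 := by rw [hLM]; norm_num
  have hL₀L : ⁅L 0, L (-1)⁆ = (-1 : ℂ) • L (-1) := by rw [hLL]; norm_num
  have hYₘYₚ : ⁅Y (-1), Y 0⁆ = M 0 := by rw [hYY]; norm_num
  have hLM₁ : ⁅L (-1), M 1⁆ = M 0 := by rw [hLM]; norm_num
  exact not_bijective_evalP2_of_lie (by norm_num) (by simpa using hLM 0 0) hL₀Yₘ hL₀Yₚ hL₀M₁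
    hL₀L (hM₀Y _) (hM₀Y _) (hMM 0 1) hM₀L hYₘYₚ (hYM _ _) (hYM _ _) hLM₁ w

/-- There is no `𝔰𝔳(1/2)`-module `V` with a `w ∈ V` such that `p(x,y) ↦ p(ρL₀,ρM₀)·w`
is a bijection `ℂ[x,y] → V`: the class of free `U(ℂL₀ ⊕ ℂM₀)`-modules of rank 1 over
the Schrödinger–Virasoro algebra `𝔰𝔳(1/2)` is empty. Here the half-integer index
`p ∈ ℤ + 1/2` of `Y_p` is encoded as `p = k + 1/2` with `k ∈ ℤ`, so `Y k` stands
for `Y_{k+1/2}`. -/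
theorem stmt19
    -- `𝔤 = 𝔰𝔳(1/2)`: a complex Lie algebra with basis
    -- `{L n, M n : n ∈ ℤ} ∪ {Y_{k+1/2} : k ∈ ℤ}` ...
    (g : Type*) [LieRing g] [LieAlgebra ℂ g] (L M Y : ℤ → g)
    (B : Module.Basis (Fin 3 × ℤ) ℂ g)
    (hB : ∀ n : ℤ, B (0, n) = L n ∧ B (1, n) = M n ∧ B (2, n) = Y n)
    -- ... and brackets (with `Y k` standing for `Y_{k+1/2}`):
    (hLL : ∀ n m : ℤ, ⁅L n, L m⁆ = ((m : ℂ) - (n : ℂ)) • L (m + n))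
    (hLY : ∀ n k : ℤ, ⁅L n, Y k⁆ = (((k : ℂ) + 1 / 2) - (n : ℂ) / 2) • Y (k + n))
    (hLM : ∀ n m : ℤ, ⁅L n, M m⁆ = (m : ℂ) • M (m + n))
    (hYY : ∀ k l : ℤ, ⁅Y k, Y l⁆ = ((l : ℂ) - (k : ℂ)) • M (k + l + 1))
    (hYM : ∀ k m : ℤ, ⁅Y k, M m⁆ = 0)
    (hMM : ∀ n m : ℤ, ⁅M n, M m⁆ = 0)
    -- then no `𝔤`-module `V` is a free `U(ℂL₀ ⊕ ℂM₀)`-module of rank 1: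
    (V : Type*) [AddCommGroup V] [Module ℂ V] [LieRingModule g V] [LieModule ℂ g V]
    (w : V) :
    ¬ Function.Bijective (evalP2 (LieModule.toEnd ℂ g V (L 0))
        (LieModule.toEnd ℂ g V (M 0)) w) :=
  stmt19_general g L M Y hLL hLY hLM hYY hYM hMM V w
end
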